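/- arXiv:2105.00046 — 5 statements merged into one kernel-verified Lean document; each statement's English description precedes it below -/
import Mathlib

section
/- Let $\Omega \subset \mathbb{R}^2$ be bounded. For compact sets $H, K, L \subseteq \overline\Omega$ with $H \subseteq K \subseteq L$, the number of connected components of $L$ disjoint from $H$ is at most the sum of the number of connected components of $K$ disjoint from $H$ and the number of connected components of $L$ disjoint from $K$. (Triangle inequality for the component-counting cost $\alpha$.) -/
open Set MeasureTheory Metric Filter
open scoped ENNReal NNReal
open Classical

noncomputable section

abbrev Plane := EuclideanSpace ℝ (Fin 2)

/-- The set of connected components of `K`. -/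
def comps {X : Type*} [TopologicalSpace X] (K : Set X) : Set (Set X) :=
  {C | ∃ x ∈ K, C = connectedComponentIn K x}

/-- `alphaN H K` is the number of connected components of `K` disjoint from `H`
if `H ⊆ K`, and `+∞` otherwise. -/
def alphaN {X : Type*} [TopologicalSpace X] (H K : Set X) : ℕ∞ :=
  if H ⊆ K then {C | C ∈ comps K ∧ Disjoint C H}.encard else ⊤

/-!
A component of `L` disjoint from `H` either misses `K`, and is then counted by `α(K, L)`, or
meets `K`; in the latter case it contains a whole component of `K`, which is disjoint from `H`.
Sending each component of `K` to the component of `L` containing it therefore hits every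
component of the second kind, so there are at most `α(H, K)` of them.
-/

section

variable {X : Type*} [TopologicalSpace X]

theorem alphaN_of_subset {H K : Set X} (h : H ⊆ K) :
    alphaN H K = {C | C ∈ comps K ∧ Disjoint C H}.encard :=
  if_pos h

theorem biUnion_connectedComponentIn_of_subset {K L : Set X} (hKL : K ⊆ L) {x : X} (hx : x ∈ K) :
    ⋃ y ∈ connectedComponentIn K x, connectedComponentIn L y = connectedComponentIn L x := by
  refine subset_antisymm (iUnion₂_subset fun y hy => ?_)
    (subset_biUnion_of_mem (mem_connectedComponentIn hx))
  exact (connectedComponentIn_eq (connectedComponentIn_mono x hKL hy)).symm.subset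

theorem encard_comps_disjoint_not_disjoint_le {H K L : Set X} (hKL : K ⊆ L) :
    {C | C ∈ comps L ∧ Disjoint C H ∧ ¬Disjoint C K}.encard ≤
      {D | D ∈ comps K ∧ Disjoint D H}.encard := by
  calc _ ≤ ((fun D => ⋃ y ∈ D, connectedComponentIn L y) ''
          {D | D ∈ comps K ∧ Disjoint D H}).encard := encard_le_encard ?_
    _ ≤ _ := encard_image_le _ _
  rintro C ⟨⟨z, -, rfl⟩, hCH, hCK⟩
  obtain ⟨x, hxC, hxK⟩ := not_disjoint_iff.mp hCK
  have hC : connectedComponentIn L z = connectedComponentIn L x := connectedComponentIn_eq hxC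
  refine ⟨connectedComponentIn K x, ⟨⟨x, hxK, rfl⟩, hCH.mono_left ?_⟩, ?_⟩
  · exact hC ▸ connectedComponentIn_mono x hKL
  · exact (biUnion_connectedComponentIn_of_subset hKL hxK).trans hC.symm

theorem alphaN_le_add {H K L : Set X} (hHK : H ⊆ K) (hKL : K ⊆ L) :
    alphaN H L ≤ alphaN H K + alphaN K L := by
  rw [alphaN_of_subset (hHK.trans hKL), alphaN_of_subset hHK, alphaN_of_subset hKL, add_comm]
  calc _ ≤ ({C | C ∈ comps L ∧ Disjoint C K} ∪
          {C | C ∈ comps L ∧ Disjoint C H ∧ ¬Disjoint C K}).encard := by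
        refine encard_le_encard fun C ⟨hC, hCH⟩ => ?_
        by_cases hCK : Disjoint C K
        exacts [Or.inl ⟨hC, hCK⟩, Or.inr ⟨hC, hCH, hCK⟩]
    _ ≤ _ := encard_union_le _ _
    _ ≤ _ := add_le_add le_rfl (encard_comps_disjoint_not_disjoint_le hKL)

end

theorem stmt_0_general (H K L : Set Plane) (hHK : H ⊆ K) (hKL : K ⊆ L) :
    alphaN H L ≤ alphaN H K + alphaN K L :=
  alphaN_le_add hHK hKL

/-- Triangle inequality for the component-counting cost `α`. -/
theorem stmt_0 (Ω : Set Plane) (hΩ : Bornology.IsBounded Ω)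
    (H K L : Set Plane)
    (hH : IsCompact H) (hK : IsCompact K) (hL : IsCompact L)
    (hHΩ : H ⊆ closure Ω) (hKΩ : K ⊆ closure Ω) (hLΩ : L ⊆ closure Ω)
    (hHK : H ⊆ K) (hKL : K ⊆ L) :
    alphaN H L ≤ alphaN H K + alphaN K L :=
  stmt_0_general H K L hHK hKL
end
end

section
/- Let $\Omega \subset \mathbb{R}^2$ be bounded, and let $H, K$ be compact subsets of $\overline\Omega$ with $H \subseteq K$. If $\mathcal{H}^1(K \setminus H) = 0$ and every connected component of $K$ intersects $H$, then $K = H$. (Separation property of the dissipation distance $\mathsf{d}$.) -/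
/-!
If `x₀ ∈ K \ H`, choose a ball `B(x₀, ρ)` missing the closed set `H`. The component `C` of `K`
through `x₀` meets `H`, so it leaves the ball, and the 1-Lipschitz map `dist · x₀` sends
`C ∩ B(x₀, ρ)` onto `[0, ρ)`. Hence `ℋ¹(K \ H) ≥ ℋ¹(C ∩ B(x₀, ρ)) ≥ ρ > 0`.
-/

open Set MeasureTheory Metric Filter
open scoped ENNReal NNReal
open Classical

noncomputable section

/-- `ℝ≥0∞`-valued version of `alphaN`. -/
def alphaE {X : Type*} [TopologicalSpace X] (H K : Set X) : ℝ≥0∞ :=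
  (alphaN H K : ℝ≥0∞)

/-- Total variation of the curve `K` induced by the cost `β`, over the set `E ⊆ ℝ`. -/
def VarOn {X : Type*} (β : Set X → Set X → ℝ≥0∞) (K : ℝ → Set X) (E : Set ℝ) : ℝ≥0∞ :=
  ⨆ (n : ℕ) (t : Fin (n+1) → ℝ) (_ : ∀ i, t i ∈ E) (_ : Monotone t),
    ∑ i : Fin n, β (K (t i.castSucc)) (K (t i.succ))

/-- `ℕ∞`-valued total variation. -/
def VarOnN {X : Type*} (β : Set X → Set X → ℕ∞) (K : ℝ → Set X) (E : Set ℝ) : ℕ∞ :=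
  ⨆ (n : ℕ) (t : Fin (n+1) → ℝ) (_ : ∀ i, t i ∈ E) (_ : Monotone t),
    ∑ i : Fin n, β (K (t i.castSucc)) (K (t i.succ))

/-- Left limit set `K(t-) = closure (⋃_{0 ≤ s < t} K(s))`. -/
def Kminus {X : Type*} [TopologicalSpace X] (K : ℝ → Set X) (t : ℝ) : Set X :=
  closure (⋃ s ∈ Set.Ico (0:ℝ) t, K s)

/-- Right limit set `K(t+) = ⋂_{t < s ≤ T} K(s)`. -/
def Kplus {X : Type*} (K : ℝ → Set X) (T t : ℝ) : Set X :=
  ⋂ s ∈ Set.Ioc t T, K s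

section PreconnectedHausdorff

variable {X : Type*} [MetricSpace X]

lemma IsPreconnected.Ico_subset_image_dist_inter_ball {C : Set X} (hC : IsPreconnected C)
    {x y : X} (hx : x ∈ C) (hy : y ∈ C) {ρ : ℝ} (hρ : ρ ≤ dist y x) :
    Ico 0 ρ ⊆ (dist · x) '' (C ∩ ball x ρ) := by
  intro c hc
  have hIcc : Icc 0 (dist y x) ⊆ (dist · x) '' C :=
    (hC.image _ (continuous_id.dist continuous_const).continuousOn).Icc_subset
      ⟨x, hx, dist_self x⟩ ⟨y, hy, rfl⟩
  obtain ⟨z, hzC, rfl⟩ := hIcc ⟨hc.1, hc.2.le.trans hρ⟩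
  exact ⟨z, ⟨hzC, mem_ball.2 hc.2⟩, rfl⟩

variable [MeasurableSpace X] [BorelSpace X]

lemma IsPreconnected.ofReal_le_hausdorffMeasure_inter_ball {C : Set X} (hC : IsPreconnected C)
    {x y : X} (hx : x ∈ C) (hy : y ∈ C) {ρ : ℝ} (hρ : ρ ≤ dist y x) :
    ENNReal.ofReal ρ ≤ μH[1] (C ∩ ball x ρ) :=
  calc ENNReal.ofReal ρ = μH[1] (Ico (0 : ℝ) ρ) := by
        rw [hausdorffMeasure_real, Real.volume_Ico, sub_zero]
    _ ≤ μH[1] ((dist · x) '' (C ∩ ball x ρ)) :=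
        measure_mono (hC.Ico_subset_image_dist_inter_ball hx hy hρ)
    _ ≤ μH[1] (C ∩ ball x ρ) := by
        simpa using (LipschitzWith.dist_left x).hausdorffMeasure_image_le zero_le_one
          (C ∩ ball x ρ)

lemma subset_of_hausdorffMeasure_diff_eq_zero {H K : Set X} (hH : IsClosed H)
    (hmeas : μH[1] (K \ H) = 0)
    (hcomp : ∀ x ∈ K, (connectedComponentIn K x ∩ H).Nonempty) : K ⊆ H := by
  intro x hxK
  by_contra hxH
  obtain ⟨ρ, hρ, hball⟩ := isOpen_iff.1 hH.isOpen_compl x hxH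
  obtain ⟨y, hyC, hyH⟩ := hcomp x hxK
  have hρy : ρ ≤ dist y x := not_lt.1 fun h => hball (mem_ball.2 h) hyH
  have hsub : connectedComponentIn K x ∩ ball x ρ ⊆ K \ H := fun z hz =>
    ⟨connectedComponentIn_subset K x hz.1, hball hz.2⟩
  have hpos : ENNReal.ofReal ρ ≤ μH[1] (K \ H) :=
    (isPreconnected_connectedComponentIn.ofReal_le_hausdorffMeasure_inter_ball
      (mem_connectedComponentIn hxK) hyC hρy).trans (measure_mono hsub)
  rw [hmeas, nonpos_iff_eq_zero, ENNReal.ofReal_eq_zero] at hpos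
  exact hpos.not_gt hρ

end PreconnectedHausdorff

theorem stmt_3_general
    (H K : Set Plane)
    (hH : IsCompact H) (hHK : H ⊆ K)
    (hmeas : μH[1] (K \ H) = 0)
    (hcomp : ∀ x ∈ K, (connectedComponentIn K x ∩ H).Nonempty) :
    K = H :=
  (subset_of_hausdorffMeasure_diff_eq_zero hH.isClosed hmeas hcomp).antisymm hHK

/-- Separation property of the dissipation distance: if `H ⊆ K`, `ℋ¹(K \ H) = 0` and
every connected component of `K` intersects `H`, then `K = H`. -/
theorem stmt_3 (Ω : Set Plane) (hΩ : Bornology.IsBounded Ω)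
    (H K : Set Plane)
    (hH : IsCompact H) (hK : IsCompact K)
    (hHΩ : H ⊆ closure Ω) (hKΩ : K ⊆ closure Ω) (hHK : H ⊆ K)
    (hmeas : μH[1] (K \ H) = 0)
    (hcomp : ∀ x ∈ K, (connectedComponentIn K x ∩ H).Nonempty) :
    K = H :=
  stmt_3_general H K hH hHK hmeas hcomp
end
end

section
/- Let $X$ be a compact metric space, $H \subseteq X$ compact, and $(K_n)_n$ compact subsets of $X$ converging to $K$ in Hausdorff distance. Let $f : X \to [0,\infty)$ be lower semicontinuous and suppose that for every open $U \subseteq X$ one has $\mathcal{H}^1((K \setminus H) \cap U) \le \liminf_n \mathcal{H}^1((K_n \setminus H) \cap U)$. Then $\int_{K\setminus H} f\, d\mathcal{H}^1 \le \liminf_n \int_{K_n \setminus H} f\, d\mathcal{H}^1$. -/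
open Set MeasureTheory Metric Filter
open scoped ENNReal NNReal
open Classical

noncomputable section

/-! Apply the layer cake formula `∫⁻ f dμ = ∫₀^∞ μ {f > t} dt` to `μ = ℋ¹ ⌞ (K \ H)` and
`μₙ = ℋ¹ ⌞ (Kₙ \ H)`. Since `f` is lower semicontinuous, every superlevel set `{f > t}` is open,
so `μ {f > t} ≤ liminf μₙ {f > t}`, and Fatou's lemma in `t` moves the `liminf` outside the
integral. -/

theorem lintegral_le_liminf_lintegral_of_lowerSemicontinuous {Ω : Type*} [MeasurableSpace Ω]
    [TopologicalSpace Ω] [OpensMeasurableSpace Ω] {μ : Measure Ω} {μs : ℕ → Measure Ω}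
    {f : Ω → ℝ} (hf : LowerSemicontinuous f) (hf_nonneg : 0 ≤ f)
    (h_opens : ∀ U, IsOpen U → μ U ≤ atTop.liminf (fun n ↦ μs n U)) :
    ∫⁻ x, ENNReal.ofReal (f x) ∂μ ≤ atTop.liminf (fun n ↦ ∫⁻ x, ENNReal.ofReal (f x) ∂μs n) := by
  simp_rw [lintegral_eq_lintegral_meas_lt _ (.of_forall hf_nonneg) hf.measurable.aemeasurable]
  calc ∫⁻ t in Ioi 0, μ {x | t < f x}
      ≤ ∫⁻ t in Ioi 0, atTop.liminf (fun n ↦ μs n {x | t < f x}) :=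
        lintegral_mono fun t ↦ h_opens _ (hf.isOpen_preimage t)
    _ ≤ atTop.liminf (fun n ↦ ∫⁻ t in Ioi 0, μs n {x | t < f x}) :=
        lintegral_liminf_le fun n ↦ Antitone.measurable fun _ _ hst ↦
          measure_mono fun _ hx ↦ lt_of_le_of_lt hst hx

theorem stmt_7_general {X : Type*} [MetricSpace X] [MeasurableSpace X]
    [BorelSpace X]
    (H K : Set X) (Kn : ℕ → Set X) (f : X → ℝ≥0)
    (hf : LowerSemicontinuous f)
    (hloc : ∀ U : Set X, IsOpen U →
      μH[1] ((K \ H) ∩ U) ≤ Filter.liminf (fun n => μH[1] ((Kn n \ H) ∩ U)) Filter.atTop) :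
    ∫⁻ x in K \ H, (f x : ℝ≥0∞) ∂μH[1]
      ≤ Filter.liminf (fun n => ∫⁻ x in Kn n \ H, (f x : ℝ≥0∞) ∂μH[1]) Filter.atTop := by
  have hf_real : LowerSemicontinuous fun x ↦ (f x : ℝ) :=
    NNReal.continuous_coe.comp_lowerSemicontinuous hf NNReal.coe_mono
  have h_opens : ∀ U, IsOpen U →
      μH[1].restrict (K \ H) U ≤ atTop.liminf (fun n ↦ μH[1].restrict (Kn n \ H) U) := by
    intro U hU
    simp only [Measure.restrict_apply hU.measurableSet, inter_comm U]
    exact hloc U hU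
  simpa only [ENNReal.ofReal_coe_nnreal] using
    lintegral_le_liminf_lintegral_of_lowerSemicontinuous hf_real (fun x ↦ (f x).coe_nonneg) h_opens

/-- Lower semicontinuity of integrals of nonnegative lower semicontinuous functions
against `ℋ¹` restricted to `K_n \ H`, given the localized Gołąb-type inequality. -/
theorem stmt_7 {X : Type*} [MetricSpace X] [CompactSpace X] [MeasurableSpace X]
    [BorelSpace X]
    (H K : Set X) (Kn : ℕ → Set X) (f : X → ℝ≥0)
    (hH : IsCompact H) (hK : IsCompact K) (hKn : ∀ n, IsCompact (Kn n))
    (hconv : Tendsto (fun n => hausdorffDist (Kn n) K) atTop (nhds 0))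
    (hf : LowerSemicontinuous f)
    (hloc : ∀ U : Set X, IsOpen U →
      μH[1] ((K \ H) ∩ U) ≤ Filter.liminf (fun n => μH[1] ((Kn n \ H) ∩ U)) Filter.atTop) :
    ∫⁻ x in K \ H, (f x : ℝ≥0∞) ∂μH[1]
      ≤ Filter.liminf (fun n => ∫⁻ x in Kn n \ H, (f x : ℝ≥0∞) ∂μH[1]) Filter.atTop :=
  stmt_7_general H K Kn f hf hloc
end
end

section
/- Let $K : [0,T] \to \mathcal{K}(\overline\Omega)$ be monotone with respect to inclusion and suppose the function $V(s) := \mathrm{Var}_{\mathsf{d}}(K,[0,s])$ is finite on $[0,T]$, where $\mathsf{d}$ is lower semicontinuous with respect to Hausdorff convergence and satisfies the triangle inequality. Then for every $t \in (0,T]$, $\lim_{s \to t^-} \mathsf{d}(K(s), K(t-)) = 0$, where $K(t-)$ is the left Hausdorff limit of $K$ at $t$. -/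
open Set MeasureTheory Metric Filter
open scoped ENNReal NNReal
open Classical

noncomputable section

/-!
The variation function `V(s) = Var_d(K, [0,s])` is monotone and finite, so it has a finite left
limit `L` at `t`. Appending the pair `s ≤ σ` to a partition of `[0,s]` gives
`V(s) + d(K(s), K(σ)) ≤ V(σ)`, hence `d(K(s), K(σ)) ≤ L - V(s)` for all `σ ∈ (s,t)`. Since `K`
is monotone, `K(σ) → K(t-)` in the Hausdorff distance as `σ → t⁻`, so lower semicontinuity of
`d` yields `d(K(s), K(t-)) ≤ L - V(s)`, which tends to `0` as `s → t⁻`.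
-/

open Topology

def HausdorffLSC {X : Type*} [PseudoMetricSpace X] (d : Set X → Set X → ℝ≥0∞) : Prop :=
  ∀ (Hn Kn : ℕ → Set X) (H K' : Set X),
    (∀ n, IsCompact (Hn n)) → (∀ n, IsCompact (Kn n)) → IsCompact H → IsCompact K' →
    Tendsto (fun n => hausdorffDist (Hn n) H) atTop (nhds 0) →
    Tendsto (fun n => hausdorffDist (Kn n) K') atTop (nhds 0) →
    d H K' ≤ Filter.liminf (fun n => d (Hn n) (Kn n)) Filter.atTop

theorem Fin.monotone_snoc {α : Type*} [Preorder α] {n : ℕ} {t : Fin (n + 1) → α} {b : α}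
    (ht : Monotone t) (hb : t (Fin.last n) ≤ b) : Monotone (Fin.snoc t b : Fin (n + 2) → α) := by
  rw [Fin.monotone_iff_le_succ]
  intro i
  induction i using Fin.lastCases with
  | last => simpa only [Fin.succ_last, Fin.snoc_last, Fin.snoc_castSucc] using hb
  | cast j =>
    simpa only [Fin.succ_castSucc, Fin.snoc_castSucc] using ht (Fin.castSucc_le_succ j)

theorem Fin.sum_snoc_consecutive {α M : Type*} [AddCommMonoid M] (f : α → α → M) {n : ℕ}
    (t : Fin (n + 1) → α) (b : α) :
    ∑ i : Fin (n + 1), f ((Fin.snoc t b : Fin (n + 2) → α) i.castSucc)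
        ((Fin.snoc t b : Fin (n + 2) → α) i.succ) =
      ∑ i : Fin n, f (t i.castSucc) (t i.succ) + f (t (Fin.last n)) b := by
  rw [Fin.sum_univ_castSucc]
  simp only [Fin.succ_castSucc, Fin.snoc_castSucc, Fin.succ_last, Fin.snoc_last]

section Variation

variable {X : Type*} (β : Set X → Set X → ℝ≥0∞) (K : ℝ → Set X)

theorem sum_le_varOn {E : Set ℝ} {n : ℕ} {t : Fin (n + 1) → ℝ} (ht : ∀ i, t i ∈ E)
    (hm : Monotone t) : ∑ i : Fin n, β (K (t i.castSucc)) (K (t i.succ)) ≤ VarOn β K E :=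
  le_iSup_of_le n <| le_iSup_of_le t <| le_iSup_of_le ht <| le_iSup_of_le hm le_rfl

theorem varOn_mono {E F : Set ℝ} (h : E ⊆ F) : VarOn β K E ≤ VarOn β K F :=
  iSup_le fun _ => iSup_le fun _ => iSup_le fun ht => iSup_le fun hm =>
    sum_le_varOn β K (fun i => h (ht i)) hm

variable {β K} {E F : Set ℝ} {a b : ℝ}

theorem sum_add_le_varOn (hEF : E ⊆ F) (ha : a ∈ F) (hb : b ∈ F) (hab : a ≤ b) {n : ℕ}
    {t : Fin (n + 1) → ℝ} (ht : ∀ i, t i ∈ E) (hm : Monotone t) (hta : t (Fin.last n) ≤ a) :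
    ∑ i : Fin n, β (K (t i.castSucc)) (K (t i.succ)) + β (K a) (K b) ≤ VarOn β K F := by
  have hmem : ∀ i, (Fin.snoc (Fin.snoc t a) b : Fin (n + 3) → ℝ) i ∈ F := by
    intro i
    induction i using Fin.lastCases with
    | last => simpa only [Fin.snoc_last] using hb
    | cast j =>
      induction j using Fin.lastCases with
      | last => simpa only [Fin.snoc_castSucc, Fin.snoc_last] using ha
      | cast k => simpa only [Fin.snoc_castSucc] using hEF (ht k)
  have hsum := sum_le_varOn β K hmem
    (Fin.monotone_snoc (Fin.monotone_snoc hm hta) (by simpa only [Fin.snoc_last] using hab))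
  rw [Fin.sum_snoc_consecutive (fun x y => β (K x) (K y)),
    Fin.sum_snoc_consecutive (fun x y => β (K x) (K y))] at hsum
  simp only [Fin.snoc_last] at hsum
  exact le_trans (by gcongr; exact le_self_add) hsum

theorem varOn_add_le (hE : ∀ x ∈ E, x ≤ a) (hEF : E ⊆ F) (ha : a ∈ F) (hb : b ∈ F)
    (hab : a ≤ b) : VarOn β K E + β (K a) (K b) ≤ VarOn β K F := by
  have hpair : β (K a) (K b) ≤ VarOn β K F := by
    simpa using sum_add_le_varOn (E := {a}) (singleton_subset_iff.2 ha) ha hb hab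
      (t := fun _ : Fin 1 => a) (fun _ => rfl) monotone_const le_rfl
  rcases eq_or_ne (β (K a) (K b)) ⊤ with htop | hne
  · simp [top_le_iff.mp (htop ▸ hpair)]
  · rw [← ENNReal.le_sub_iff_add_le_right hne hpair]
    exact iSup_le fun _ => iSup_le fun _ => iSup_le fun ht => iSup_le fun hm =>
      ENNReal.le_sub_of_add_le_right hne
        (sum_add_le_varOn hEF ha hb hab ht hm (hE _ (ht _)))

theorem le_varOn_Icc_sub {s σ : ℝ} (hs : 0 ≤ s) (hsσ : s ≤ σ)
    (hfin : VarOn β K (Icc 0 s) ≠ ⊤) :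
    β (K s) (K σ) ≤ VarOn β K (Icc 0 σ) - VarOn β K (Icc 0 s) :=
  ENNReal.le_sub_of_add_le_left hfin <| varOn_add_le (fun _ hx => hx.2)
    (Icc_subset_Icc_right hsσ) ⟨hs, hsσ⟩ ⟨hs.trans hsσ, le_rfl⟩ hsσ

end Variation

section LeftLimit

variable {X : Type*} [PseudoMetricSpace X] {K : ℝ → Set X} {t : ℝ}

theorem subset_Kminus {s : ℝ} (hs : s ∈ Ico 0 t) : K s ⊆ Kminus K t :=
  (subset_biUnion_of_mem hs).trans subset_closure

theorem isCompact_Kminus [ProperSpace X] {S : Set X} (hS : Bornology.IsBounded S)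
    (hK : ∀ s ∈ Ico 0 t, K s ⊆ S) : IsCompact (Kminus K t) :=
  isCompact_of_isClosed_isBounded isClosed_closure (hS.subset (iUnion₂_subset hK)).closure

theorem exists_Kminus_subset_thickening (ht : 0 < t) (hK : MonotoneOn K (Ico 0 t))
    (hA : IsCompact (Kminus K t)) {δ : ℝ} (hδ : 0 < δ) :
    ∃ u ∈ Ico 0 t, Kminus K t ⊆ thickening δ (K u) := by
  have : Nonempty (Ico 0 t) := ⟨⟨0, le_rfl, ht⟩⟩
  have hcover : Kminus K t ⊆ ⋃ u : Ico 0 t, thickening δ (K u) := by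
    rw [← thickening_iUnion, iUnion_subtype]
    exact closure_subset_thickening hδ _
  have hdir : Directed (· ⊆ ·) fun u : Ico 0 t => thickening δ (K u) :=
    Monotone.directed_le fun u v huv => thickening_subset_of_subset δ (hK u.2 v.2 huv)
  obtain ⟨u, hu⟩ := hA.elim_directed_cover _ (fun _ => isOpen_thickening) hcover hdir
  exact ⟨u, u.2, hu⟩

theorem tendsto_hausdorffDist_Kminus (ht : 0 < t) (hK : MonotoneOn K (Ico 0 t))
    (hA : IsCompact (Kminus K t)) :
    Tendsto (fun s => hausdorffDist (K s) (Kminus K t)) (𝓝[<] t) (𝓝 0) := by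
  rw [Metric.tendsto_nhds]
  intro ε hε
  obtain ⟨u, hu, hcover⟩ := exists_Kminus_subset_thickening ht hK hA (half_pos hε)
  filter_upwards [Ioo_mem_nhdsLT hu.2] with s hs
  have hs' : s ∈ Ico 0 t := ⟨hu.1.trans hs.1.le, hs.2⟩
  have hle : hausdorffDist (K s) (Kminus K t) ≤ ε / 2 := by
    refine hausdorffDist_le_of_mem_dist (half_pos hε).le
      (fun x hx => ⟨x, subset_Kminus hs' hx, by simpa using (half_pos hε).le⟩) fun y hy => ?_
    obtain ⟨z, hz, hyz⟩ := mem_thickening_iff.1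
      (thickening_subset_of_subset _ (hK hu hs' hs.1.le) (hcover hy))
    exact ⟨z, hz, hyz.le⟩
  rw [Real.dist_0_eq_abs, abs_of_nonneg hausdorffDist_nonneg]
  linarith

end LeftLimit

theorem HausdorffLSC.le_of_tendsto_nhdsLT {X : Type*} [PseudoMetricSpace X]
    {d : Set X → Set X → ℝ≥0∞} (hd : HausdorffLSC d) {H A : Set X} {K : ℝ → Set X} {s t : ℝ}
    {c : ℝ≥0∞} (hst : s < t) (hH : IsCompact H) (hK : ∀ σ ∈ Ioo s t, IsCompact (K σ))
    (hA : IsCompact A) (hKA : Tendsto (fun σ => hausdorffDist (K σ) A) (𝓝[<] t) (𝓝 0))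
    (hc : ∀ σ ∈ Ioo s t, d H (K σ) ≤ c) : d H A ≤ c := by
  obtain ⟨σ, -, hσ, hσt⟩ := exists_seq_strictMono_tendsto' hst
  have hσ' : Tendsto σ atTop (𝓝[<] t) :=
    tendsto_nhdsWithin_of_tendsto_nhds_of_eventually_within σ hσt
      (Eventually.of_forall fun n => (hσ n).2)
  calc d H A ≤ liminf (fun n => d H (K (σ n))) atTop :=
        hd (fun _ => H) (K ∘ σ) H A (fun _ => hH) (fun n => hK _ (hσ n)) hH hA
          (by simp [hausdorffDist_self_zero]) (hKA.comp hσ')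
    _ ≤ c := liminf_le_of_frequently_le' (Frequently.of_forall fun n => hc _ (hσ n))

theorem stmt_12_general (Ω : Set Plane) (hΩ : Bornology.IsBounded Ω) (T : ℝ)
    (d : Set Plane → Set Plane → ℝ≥0∞)
    (hlsc : ∀ (Hn Kn : ℕ → Set Plane) (H K' : Set Plane),
      (∀ n, IsCompact (Hn n)) → (∀ n, IsCompact (Kn n)) → IsCompact H → IsCompact K' →
      Tendsto (fun n => hausdorffDist (Hn n) H) atTop (nhds 0) →
      Tendsto (fun n => hausdorffDist (Kn n) K') atTop (nhds 0) →
      d H K' ≤ Filter.liminf (fun n => d (Hn n) (Kn n)) Filter.atTop)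
    (K : ℝ → Set Plane)
    (hcomp : ∀ t ∈ Set.Icc (0:ℝ) T, IsCompact (K t))
    (hsub : ∀ t ∈ Set.Icc (0:ℝ) T, K t ⊆ closure Ω)
    (hmono : ∀ s t : ℝ, s ∈ Set.Icc (0:ℝ) T → t ∈ Set.Icc (0:ℝ) T → s ≤ t → K s ⊆ K t)
    (hvar : ∀ s ∈ Set.Icc (0:ℝ) T, VarOn d K (Set.Icc 0 s) ≠ ⊤) :
    ∀ t ∈ Set.Ioc (0:ℝ) T,
      Tendsto (fun s => d (K s) (Kminus K t)) (nhdsWithin t (Set.Ico 0 t)) (nhds 0) := by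
  rintro t ⟨ht0, htT⟩
  have hIcc : ∀ s ≤ t, 0 ≤ s → s ∈ Icc 0 T := fun s hst hs => ⟨hs, hst.trans htT⟩
  set V : ℝ → ℝ≥0∞ := fun s => VarOn d K (Icc 0 s)
  have hV : Monotone V := fun _ _ h => varOn_mono d K (Icc_subset_Icc_right h)
  set L := sSup (V '' Iio t)
  have hVL : Tendsto V (𝓝[<] t) (𝓝 L) := hV.tendsto_nhdsLT t
  have hL : L ≠ ⊤ := ne_top_of_le_ne_top (hvar t (hIcc t le_rfl ht0.le))
    (sSup_le (forall_mem_image.2 fun _ hs => hV (le_of_lt hs)))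
  have hA : IsCompact (Kminus K t) :=
    isCompact_Kminus hΩ.closure fun s hs => hsub s (hIcc s hs.2.le hs.1)
  have hHaus := tendsto_hausdorffDist_Kminus ht0
    (fun a ha b hb hab => hmono a b (hIcc a ha.2.le ha.1) (hIcc b hb.2.le hb.1) hab) hA
  have hbound : ∀ s ∈ Ico 0 t, d (K s) (Kminus K t) ≤ L - V s := by
    rintro s ⟨hs0, hst⟩
    refine HausdorffLSC.le_of_tendsto_nhdsLT hlsc hst (hcomp s (hIcc s hst.le hs0))
      (fun σ hσ => hcomp σ (hIcc σ hσ.2.le (hs0.trans hσ.1.le))) hA hHaus fun σ hσ => ?_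
    calc d (K s) (K σ) ≤ V σ - V s := le_varOn_Icc_sub hs0 hσ.1.le (hvar s (hIcc s hst.le hs0))
      _ ≤ L - V s := tsub_le_tsub_right (le_sSup (mem_image_of_mem V (mem_Iio.2 hσ.2))) _
  have hgap : Tendsto (fun s => L - V s) (𝓝[<] t) (𝓝 0) := by
    simpa using ENNReal.Tendsto.sub tendsto_const_nhds hVL (Or.inl hL)
  rw [nhdsWithin_Ico_eq_nhdsLT ht0]
  exact tendsto_of_tendsto_of_tendsto_of_le_of_le' tendsto_const_nhds hgap
    (Eventually.of_forall fun _ => zero_le)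
    (eventually_of_mem (Ico_mem_nhdsLT ht0) hbound)

/-- If the `𝖽`-total variation of a monotone curve is finite and `𝖽` is lower
semicontinuous w.r.t. Hausdorff convergence and satisfies the triangle inequality,
then `𝖽(K(s), K(t-)) → 0` as `s → t⁻`. -/
theorem stmt_12 (Ω : Set Plane) (hΩ : Bornology.IsBounded Ω) (T : ℝ) (hT : 0 < T)
    (d : Set Plane → Set Plane → ℝ≥0∞)
    (htri : ∀ A B C : Set Plane, d A C ≤ d A B + d B C)
    (hlsc : ∀ (Hn Kn : ℕ → Set Plane) (H K' : Set Plane),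
      (∀ n, IsCompact (Hn n)) → (∀ n, IsCompact (Kn n)) → IsCompact H → IsCompact K' →
      Tendsto (fun n => hausdorffDist (Hn n) H) atTop (nhds 0) →
      Tendsto (fun n => hausdorffDist (Kn n) K') atTop (nhds 0) →
      d H K' ≤ Filter.liminf (fun n => d (Hn n) (Kn n)) Filter.atTop)
    (K : ℝ → Set Plane)
    (hcomp : ∀ t ∈ Set.Icc (0:ℝ) T, IsCompact (K t))
    (hsub : ∀ t ∈ Set.Icc (0:ℝ) T, K t ⊆ closure Ω)
    (hmono : ∀ s t : ℝ, s ∈ Set.Icc (0:ℝ) T → t ∈ Set.Icc (0:ℝ) T → s ≤ t → K s ⊆ K t)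
    (hvar : ∀ s ∈ Set.Icc (0:ℝ) T, VarOn d K (Set.Icc 0 s) ≠ ⊤) :
    ∀ t ∈ Set.Ioc (0:ℝ) T,
      Tendsto (fun s => d (K s) (Kminus K t)) (nhdsWithin t (Set.Ico 0 t)) (nhds 0) :=
  stmt_12_general Ω hΩ T d hlsc K hcomp hsub hmono hvar
end
end

section
/- Let $\Omega \subset \mathbb{R}^2$ be bounded and let $K : [0,T] \to \mathcal{K}_{\mathrm{fin}}(\overline\Omega)$ be monotone with respect to inclusion. For the dissipation distance $\mathsf{d}(H,K') = \mathcal{H}^1(K'\setminus H) + \lambda\,\alpha(H,K')$ (for $H \subseteq K'$; $+\infty$ otherwise), the total variation satisfies, for every $t \in [0,T]$: $\mathrm{Var}_{\mathsf{d}}(K,[0,t]) = \mathcal{H}^1(K(t)\setminus K(0)) + \lambda\,\mathrm{Var}_\alpha(K,[0,t])$. -/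
open Set MeasureTheory Metric Filter
open scoped ENNReal NNReal
open Classical

noncomputable section

/-- The dissipation distance `𝖽(H,K') = ℋ¹(K' \ H) + λ α(H,K')` (for `H ⊆ K'`). -/
def dd (lam : ℝ≥0∞) (H K : Set Plane) : ℝ≥0∞ :=
  if H ⊆ K then μH[1] (K \ H) + lam * alphaE H K else ⊤

/-!
Along a monotone chain `K t₀ ⊆ ⋯ ⊆ K tₙ` of measurable sets the `𝖽`-sum of a partition splits
as `∑ ℋ¹(K tᵢ₊₁ \ K tᵢ) + λ ∑ α(K tᵢ, K tᵢ₊₁)`, and by additivity of `ℋ¹` the first sum telescopes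
to `ℋ¹(K tₙ \ K t₀) ≤ ℋ¹(K t \ K 0)`; this gives `≤`. Conversely, adding the endpoints `0` and `t`
to a partition does not decrease its `α`-sum and makes the telescoped term exactly
`ℋ¹(K t \ K 0)`.
-/

def chainSum {α M : Type*} [AddCommMonoid M] (β : α → α → M) {n : ℕ} (x : Fin (n + 1) → α) : M :=
  ∑ i : Fin n, β (x i.castSucc) (x i.succ)

section chainSum

variable {α M : Type*} [AddCommMonoid M] (β : α → α → M)

@[simp]
lemma chainSum_fin_one (x : Fin 1 → α) : chainSum β x = 0 := by
  simp [chainSum]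

lemma chainSum_cons {n : ℕ} (a : α) (x : Fin (n + 1) → α) :
    chainSum β (Fin.cons a x : Fin (n + 2) → α) = β a (x 0) + chainSum β x := by
  simp [chainSum, Fin.sum_univ_succ]

lemma chainSum_snoc {n : ℕ} (x : Fin (n + 1) → α) (b : α) :
    chainSum β (Fin.snoc x b : Fin (n + 2) → α) = chainSum β x + β (x (Fin.last n)) b := by
  simp [chainSum, Fin.sum_univ_castSucc, -Fin.castSucc_succ, Fin.succ_castSucc]

lemma chainSum_le_chainSum_cons_snoc [PartialOrder M] [CanonicallyOrderedAdd M] {n : ℕ}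
    (x : Fin (n + 1) → α) (a b : α) :
    chainSum β x ≤ chainSum β (Fin.cons a (Fin.snoc x b) : Fin (n + 3) → α) := by
  rw [chainSum_cons, chainSum_snoc, ← add_assoc]
  exact le_add_self.trans le_self_add

end chainSum

lemma chainSum_const_mul {α M : Type*} [NonUnitalNonAssocSemiring M] (c : M) (β : α → α → M)
    {n : ℕ} (x : Fin (n + 1) → α) :
    chainSum (fun a b => c * β a b) x = c * chainSum β x :=
  (Finset.mul_sum _ _ _).symm

lemma Monotone.fin_snoc {α : Type*} [Preorder α] {n : ℕ} {x : Fin (n + 1) → α} (hx : Monotone x)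
    {b : α} (hb : x (Fin.last n) ≤ b) : Monotone (Fin.snoc x b : Fin (n + 2) → α) := by
  rw [Fin.monotone_iff_le_succ]
  intro i
  induction i using Fin.lastCases with
  | last => simpa using hb
  | cast j => simpa [-Fin.castSucc_succ, Fin.succ_castSucc] using hx j.castSucc_le_succ

lemma Fin.cons_snoc_mem_Icc {α : Type*} [Preorder α] {n : ℕ} {a b : α} (hab : a ≤ b)
    {x : Fin (n + 1) → α} (hx : ∀ i, x i ∈ Icc a b) :
    ∀ i, (Fin.cons a (Fin.snoc x b) : Fin (n + 3) → α) i ∈ Icc a b := by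
  refine Fin.forall_fin_succ.2 ⟨⟨le_rfl, hab⟩, Fin.forall_fin_succ'.2 ⟨fun i => ?_, ?_⟩⟩ <;>
    simp [hx, hab]

lemma Monotone.fin_cons_snoc {α : Type*} [Preorder α] {n : ℕ} {x : Fin (n + 1) → α}
    (hx : Monotone x) {a b : α} (ha : a ≤ x 0) (hb : x (Fin.last n) ≤ b) :
    Monotone (Fin.cons a (Fin.snoc x b) : Fin (n + 3) → α) :=
  (hx.fin_snoc hb).vecCons (by simpa using ha)

lemma measure_sdiff_add_measure_sdiff {X : Type*} [MeasurableSpace X] (μ : Measure X)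
    {A B C : Set X} (hAB : A ⊆ B) (hBC : B ⊆ C) (hB : MeasurableSet B) :
    μ (B \ A) + μ (C \ B) = μ (C \ A) := by
  rw [← measure_sdiff_add_inter (C \ A) hB, add_comm]
  congr 2 <;> ext x <;> have := @hAB x <;> have := @hBC x <;> simp <;> tauto

lemma chainSum_measure_sdiff {X : Type*} [MeasurableSpace X] (μ : Measure X) {n : ℕ}
    {A : Fin (n + 1) → Set X} (hA : Monotone A) (hmeas : ∀ i, MeasurableSet (A i)) :
    chainSum (fun B C => μ (C \ B)) A = μ (A (Fin.last n) \ A 0) := by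
  induction n with
  | zero => simp
  | succ n ih =>
    have hsnoc := chainSum_snoc (fun B C => μ (C \ B)) (Fin.init A) (A (Fin.last _))
    rw [Fin.snoc_init_self] at hsnoc
    rw [hsnoc, ih (A := Fin.init A) (hA.comp (Fin.strictMono_castSucc.monotone)) fun i => hmeas _]
    simp only [Fin.init, Fin.castSucc_zero]
    exact measure_sdiff_add_measure_sdiff μ (hA (Fin.zero_le _)) (hA (Fin.le_last _))
      (hmeas _)

section VarOn

variable {X : Type*} (β : Set X → Set X → ℝ≥0∞) (K : ℝ → Set X) (E : Set ℝ)

lemma chainSum_le_VarOn {n : ℕ} {t : Fin (n + 1) → ℝ} (hE : ∀ i, t i ∈ E) (ht : Monotone t) :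
    chainSum β (K ∘ t) ≤ VarOn β K E :=
  le_iSup₂_of_le n t <| le_iSup₂_of_le hE ht le_rfl

lemma VarOn_le_iff {D : ℝ≥0∞} :
    VarOn β K E ≤ D ↔
      ∀ n (t : Fin (n + 1) → ℝ), (∀ i, t i ∈ E) → Monotone t → chainSum β (K ∘ t) ≤ D := by
  simp only [VarOn, iSup_le_iff]
  rfl

lemma add_VarOn_le_iff {c D : ℝ≥0∞} (hE : E.Nonempty) :
    c + VarOn β K E ≤ D ↔
      ∀ n (t : Fin (n + 1) → ℝ), (∀ i, t i ∈ E) → Monotone t → c + chainSum β (K ∘ t) ≤ D := by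
  refine ⟨fun h n t hE ht => le_trans (by gcongr; exact chainSum_le_VarOn β K E hE ht) h,
    fun h => ?_⟩
  obtain ⟨e, he⟩ := hE
  have hcD : c ≤ D := by simpa using h 0 (fun _ => e) (fun _ => he) monotone_const
  rcases eq_or_ne c ⊤ with rfl | hc
  · simp [top_le_iff.1 hcD]
  · exact add_le_of_le_tsub_left_of_le hcD <| (VarOn_le_iff β K E).2 fun n t hE ht =>
      ENNReal.le_sub_of_add_le_left hc (h n t hE ht)

lemma const_mul_VarOn (c : ℝ≥0∞) : c * VarOn β K E = VarOn (fun A B => c * β A B) K E := by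
  simp only [VarOn, ENNReal.mul_iSup, Finset.mul_sum]

end VarOn

lemma dd_of_subset (lam : ℝ≥0∞) {H K : Set Plane} (h : H ⊆ K) :
    dd lam H K = μH[1] (K \ H) + lam * alphaE H K :=
  if_pos h

lemma chainSum_dd (lam : ℝ≥0∞) {n : ℕ} {A : Fin (n + 1) → Set Plane} (hA : Monotone A)
    (hmeas : ∀ i, MeasurableSet (A i)) :
    chainSum (dd lam) A = μH[1] (A (Fin.last n) \ A 0) + lam * chainSum alphaE A := by
  rw [← chainSum_measure_sdiff μH[1] hA hmeas, ← chainSum_const_mul, chainSum, chainSum, chainSum,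
    ← Finset.sum_add_distrib]
  exact Finset.sum_congr rfl fun i _ => dd_of_subset lam (hA i.castSucc_le_succ)

lemma VarOn_dd_Icc {a b : ℝ} (hab : a ≤ b) (lam : ℝ≥0∞) {K : ℝ → Set Plane}
    (hK : MonotoneOn K (Icc a b)) (hmeas : ∀ u ∈ Icc a b, MeasurableSet (K u)) :
    VarOn (dd lam) K (Icc a b) = μH[1] (K b \ K a) + lam * VarOn alphaE K (Icc a b) := by
  have hchain : ∀ {n} {s : Fin (n + 1) → ℝ}, (∀ i, s i ∈ Icc a b) → Monotone s →
      chainSum (dd lam) (K ∘ s)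
        = μH[1] (K (s (Fin.last n)) \ K (s 0)) + lam * chainSum alphaE (K ∘ s) := fun hs hmon =>
    chainSum_dd lam (fun i j hij => hK (hs i) (hs j) (hmon hij)) fun i => hmeas _ (hs i)
  have ha : a ∈ Icc a b := left_mem_Icc.2 hab
  have hb : b ∈ Icc a b := right_mem_Icc.2 hab
  refine le_antisymm ((VarOn_le_iff _ _ _).2 fun n s hs hmon => ?_) ?_
  · rw [hchain hs hmon]
    gcongr
    · exact hK (hs _) hb (hs _).2
    · exact hK ha (hs _) (hs _).1
    · exact chainSum_le_VarOn _ _ _ hs hmon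
  · rw [const_mul_VarOn, add_VarOn_le_iff _ _ _ ⟨a, ha⟩]
    intro n s hs hmon
    have hs' := Fin.cons_snoc_mem_Icc hab hs
    have hmon' := hmon.fin_cons_snoc (hs 0).1 (hs _).2
    calc μH[1] (K b \ K a) + chainSum (fun A B => lam * alphaE A B) (K ∘ s)
        ≤ μH[1] (K b \ K a) + lam * chainSum alphaE (K ∘ Fin.cons a (Fin.snoc s b)) := by
          rw [chainSum_const_mul, Fin.comp_cons, Fin.comp_snoc]
          gcongr
          exact chainSum_le_chainSum_cons_snoc _ _ _ _
      _ = chainSum (dd lam) (K ∘ Fin.cons a (Fin.snoc s b)) := by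
          rw [hchain hs' hmon']
          simp
      _ ≤ _ := chainSum_le_VarOn _ _ _ hs' hmon'

theorem stmt_14_general (T : ℝ) (lam : ℝ≥0∞) (K : ℝ → Set Plane)
    (hcomp : ∀ t ∈ Set.Icc (0:ℝ) T, IsCompact (K t))
    (hmono : ∀ s t : ℝ, s ∈ Set.Icc (0:ℝ) T → t ∈ Set.Icc (0:ℝ) T → s ≤ t → K s ⊆ K t) :
    ∀ t ∈ Set.Icc (0:ℝ) T,
      VarOn (dd lam) K (Set.Icc 0 t)
        = μH[1] (K t \ K 0) + lam * VarOn alphaE K (Set.Icc 0 t) := by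
  rintro t ⟨ht0, htT⟩
  have hsub : Icc 0 t ⊆ Icc 0 T := Icc_subset_Icc_right htT
  exact VarOn_dd_Icc ht0 lam (fun u hu v hv huv => hmono u v (hsub hu) (hsub hv) huv)
    fun u hu => (hcomp u (hsub hu)).isClosed.measurableSet

/-- Explicit formula for the `𝖽`-total variation of a monotone `𝒦_fin`-valued curve:
`Var_𝖽(K,[0,t]) = ℋ¹(K(t) \ K(0)) + λ Var_α(K,[0,t])`. -/
theorem stmt_14 (Ω : Set Plane) (hΩ : Bornology.IsBounded Ω) (T : ℝ) (hT : 0 < T)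
    (lam : ℝ≥0∞) (hlam : 0 < lam) (hlam' : lam ≠ ⊤)
    (K : ℝ → Set Plane)
    (hcomp : ∀ t ∈ Set.Icc (0:ℝ) T, IsCompact (K t))
    (hsub : ∀ t ∈ Set.Icc (0:ℝ) T, K t ⊆ closure Ω)
    (hfinH : ∀ t ∈ Set.Icc (0:ℝ) T, μH[1] (K t) < ⊤)
    (hfinC : ∀ t ∈ Set.Icc (0:ℝ) T, alphaN ∅ (K t) < ⊤)
    (hmono : ∀ s t : ℝ, s ∈ Set.Icc (0:ℝ) T → t ∈ Set.Icc (0:ℝ) T → s ≤ t → K s ⊆ K t) :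
    ∀ t ∈ Set.Icc (0:ℝ) T,
      VarOn (dd lam) K (Set.Icc 0 t)
        = μH[1] (K t \ K 0) + lam * VarOn alphaE K (Set.Icc 0 t) :=
  stmt_14_general T lam K hcomp hmono
end
end
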